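/- Let T be a tree whose expanding number satisfies γ_T = 1 (an unexpandable tree). Then for every fixed m ≥ 1, the proportion of vertices in the outer m levels is asymptotically negligible: lim_{n→∞} |Δ_n \ Δ_{n−m}|/|Δ_n| = 0. -/

import Mathlib

open Filter

/-- A (rooted, locally finite) tree realized as a set of finite words over the
`d` generators: it contains the root (the empty word) and is closed under prefixes. -/
def IsTree {d : ℕ} (T : Set (List (Fin d))) : Prop :=
  ([] : List (Fin d)) ∈ T ∧ ∀ w ∈ T, ∀ u : List (Fin d), u <+: w → u ∈ T

/-- `T_n`: the set of vertices of `T` at distance `n` from the root. -/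
def level {d : ℕ} (T : Set (List (Fin d))) (n : ℕ) : Set (List (Fin d)) :=
  {w ∈ T | w.length = n}

/-- `Δ_n = ∪_{i=0}^n T_i`: the set of vertices of `T` at distance at most `n`. -/
def ball {d : ℕ} (T : Set (List (Fin d))) (n : ℕ) : Set (List (Fin d)) :=
  {w ∈ T | w.length ≤ n}

/-- The statement that the expanding number `γ_T = lim_n |T_{n+1}|/|T_n|` exists
and equals `γ`. -/
def HasExpandingNumber {d : ℕ} (T : Set (List (Fin d))) (γ : ℝ) : Prop :=
  Tendsto (fun n : ℕ => ((level T (n + 1)).ncard : ℝ) / ((level T n).ncard : ℝ)) atTop (nhds γ)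

/-- `|P(Δ_n, 𝒯)|`: the number of restrictions of labeled trees of `𝒯` to `Δ_n`. -/
noncomputable def ballBlockCount {d : ℕ} {A : Type*} (T : Set (List (Fin d)))
    (𝒯 : Set (List (Fin d) → A)) (n : ℕ) : ℕ :=
  Set.ncard ((fun t (w : ball T n) => t (w : List (Fin d))) '' 𝒯)

/-- The entropy of a tree-shift, `h(𝒯) = limsup_n log |P(Δ_n,𝒯)| / |Δ_n|`. -/
noncomputable def treeEntropy {d : ℕ} {A : Type*} (T : Set (List (Fin d)))
    (𝒯 : Set (List (Fin d) → A)) : ℝ :=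
  limsup (fun n : ℕ => Real.log (ballBlockCount T 𝒯 n) / ((ball T n).ncard : ℝ)) atTop

/-- `S` is an independence set for `𝒯`: every assignment of symbols on `S`
extends to an element of `𝒯`. -/
def IsIndepSet {I A : Type*} (𝒯 : Set (I → A)) (S : Set I) : Prop :=
  ∀ u : I → A, ∃ t ∈ 𝒯, ∀ w ∈ S, t w = u w

/-!
Write `a n = |T_n|` and `S n = |Δ_n| = ∑_{i ≤ n} a i`. If `a (n+1) / a n → 1`, then for each
fixed `K` the last `K` terms of `S n` are each close to `a n`, so eventually `S n / a n > K - 1`;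
hence the top level is negligible, `a n / S n → 0`. The outer `m` levels are then handled one at
a time: the level `n - j` is at most `a (n - j) / S (n - j)` of `S n`, because `S` is monotone.
-/

open Finset Topology

section RealSequences

variable {a S : ℕ → ℝ}

lemma tendsto_add_div_of_tendsto_succ_div (ha : ∀ n, a n ≠ 0)
    (h : Tendsto (fun n => a (n + 1) / a n) atTop (𝓝 1)) (j : ℕ) :
    Tendsto (fun n => a (n + j) / a n) atTop (𝓝 1) := by
  induction j with
  | zero => simp [div_self (ha _)]
  | succ j ih =>
    have := (h.comp (tendsto_add_atTop_nat j)).mul ih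
    rw [one_mul] at this
    exact this.congr fun n => div_mul_div_cancel₀ (ha _)

lemma tendsto_sub_div_of_tendsto_succ_div (ha : ∀ n, a n ≠ 0)
    (h : Tendsto (fun n => a (n + 1) / a n) atTop (𝓝 1)) (j : ℕ) :
    Tendsto (fun n => a (n - j) / a n) atTop (𝓝 1) := by
  have := ((tendsto_add_div_of_tendsto_succ_div ha h j).inv₀ one_ne_zero).comp
    (tendsto_sub_atTop_nat j)
  rw [inv_one] at this
  refine this.congr' ((eventually_ge_atTop j).mono fun n hn => ?_)
  simp [Nat.sub_add_cancel hn]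

lemma tendsto_sum_range_succ_div_atTop (ha : ∀ n, 0 < a n)
    (h : Tendsto (fun n => a (n + 1) / a n) atTop (𝓝 1)) :
    Tendsto (fun n => (∑ i ∈ range (n + 1), a i) / a n) atTop atTop := by
  refine tendsto_atTop.2 fun b => ?_
  obtain ⟨K, hK⟩ := exists_nat_gt b
  have hsum : Tendsto (fun n => ∑ j ∈ range K, a (n - j) / a n) atTop (𝓝 K) := by
    simpa using tendsto_finsetSum (range K) fun j _ =>
      tendsto_sub_div_of_tendsto_succ_div (fun n => (ha n).ne') h j
  filter_upwards [hsum.eventually_const_lt hK, eventually_ge_atTop K] with n hlt hn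
  calc b ≤ ∑ j ∈ range K, a (n - j) / a n := hlt.le
    _ ≤ ∑ j ∈ range (n + 1), a (n - j) / a n :=
      sum_le_sum_of_subset_of_nonneg (range_subset_range.2 (by omega))
        fun j _ _ => (div_pos (ha _) (ha n)).le
    _ = (∑ i ∈ range (n + 1), a i) / a n := by
      rw [← sum_div, ← sum_range_reflect a (n + 1)]
      simp

lemma tendsto_div_sum_range_succ (ha : ∀ n, 0 < a n)
    (h : Tendsto (fun n => a (n + 1) / a n) atTop (𝓝 1)) :
    Tendsto (fun n => a n / ∑ i ∈ range (n + 1), a i) atTop (𝓝 0) := by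
  simpa [Pi.inv_def] using (tendsto_sum_range_succ_div_atTop ha h).inv_tendsto_atTop

lemma tendsto_sub_sub_div_of_tendsto_sub_pred_div (hS : Monotone S) (hpos : ∀ n, 0 < S n)
    (h : Tendsto (fun n => (S n - S (n - 1)) / S n) atTop (𝓝 0)) (m : ℕ) :
    Tendsto (fun n => (S n - S (n - m)) / S n) atTop (𝓝 0) := by
  induction m with
  | zero => simp
  | succ m ih =>
    have hlast : Tendsto (fun n => (S (n - m) - S (n - m - 1)) / S n) atTop (𝓝 0) :=
      tendsto_of_tendsto_of_tendsto_of_le_of_le tendsto_const_nhds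
        (h.comp (tendsto_sub_atTop_nat m))
        (fun n => div_nonneg (sub_nonneg.2 (hS (Nat.sub_le _ _))) (hpos n).le)
        (fun n => div_le_div_of_nonneg_left (sub_nonneg.2 (hS (Nat.sub_le _ _))) (hpos _)
          (hS (Nat.sub_le _ _)))
    have := ih.add hlast
    rw [add_zero] at this
    refine this.congr fun n => ?_
    rw [← add_div, sub_add_sub_cancel, Nat.sub_sub]

end RealSequences

section Tree

variable {d : ℕ} (T : Set (List (Fin d)))

lemma level_finite (n : ℕ) : (level T n).Finite :=
  (List.finite_length_eq (Fin d) n).subset fun _ hw => hw.2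

lemma ball_finite (n : ℕ) : (ball T n).Finite :=
  (List.finite_length_le (Fin d) n).subset fun _ hw => hw.2

lemma ball_mono : Monotone (ball T) :=
  fun _ _ hmn _ hw => ⟨hw.1, hw.2.trans hmn⟩

lemma ball_zero : ball T 0 = level T 0 := by
  simp [ball, level]

lemma ball_succ (n : ℕ) : ball T (n + 1) = ball T n ∪ level T (n + 1) := by
  ext w
  by_cases hw : w ∈ T <;> simp [ball, level, hw]
  omega

lemma ncard_ball_succ (n : ℕ) :
    (ball T (n + 1)).ncard = (ball T n).ncard + (level T (n + 1)).ncard := by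
  rw [ball_succ, Set.ncard_union_eq _ (ball_finite T n) (level_finite T (n + 1))]
  exact Set.disjoint_left.2 fun w hw hw' => by have := hw.2; have := hw'.2; omega

lemma ncard_ball_eq_sum_ncard_level (n : ℕ) :
    (ball T n).ncard = ∑ i ∈ range (n + 1), (level T i).ncard := by
  induction n with
  | zero => simp [ball_zero]
  | succ n ih => rw [ncard_ball_succ, ih, sum_range_succ _ (n + 1)]

end Tree

theorem outer_levels_negligible_of_unexpandable_general
    (d : ℕ) (T : Set (List (Fin d)))
    (hne : ∀ n : ℕ, (level T n).Nonempty)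
    (hγ : HasExpandingNumber T 1) (m : ℕ) :
    Tendsto (fun n : ℕ => (((ball T n \ ball T (n - m)).ncard : ℝ) / ((ball T n).ncard : ℝ)))
      atTop (nhds 0) := by
  set a : ℕ → ℝ := fun n => (level T n).ncard
  set S : ℕ → ℝ := fun n => (ball T n).ncard
  have hS : ∀ n, S n = ∑ i ∈ range (n + 1), a i := fun n => by
    simp [S, a, ncard_ball_eq_sum_ncard_level]
  have ha : ∀ n, 0 < a n := fun n => by
    simpa [a] using (Set.ncard_pos (level_finite T n)).2 (hne n)
  have hSpos : ∀ n, 0 < S n := fun n => by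
    rw [hS]; exact sum_pos (fun i _ => ha i) nonempty_range_add_one
  have hSmono : Monotone S := fun _ _ hmn =>
    Nat.cast_le.2 (Set.ncard_le_ncard (ball_mono T hmn) (ball_finite T _))
  have htop : Tendsto (fun n => (S n - S (n - 1)) / S n) atTop (𝓝 0) := by
    refine (tendsto_div_sum_range_succ ha hγ).congr' ?_
    filter_upwards [eventually_ge_atTop 1] with n hn
    obtain ⟨k, rfl⟩ := Nat.exists_eq_add_of_le' hn
    simp [hS, sum_range_succ _ (k + 1)]
  refine (tendsto_sub_sub_div_of_tendsto_sub_pred_div hSmono hSpos htop m).congr fun n => ?_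
  rw [Set.cast_ncard_sdiff (ball_mono T (Nat.sub_le n m)) (ball_finite T n)]

/-- If `T` is an unexpandable tree (`γ_T = 1`, with all levels
nonempty), then for every fixed `m ≥ 1` the proportion of vertices in the outer `m`
levels is asymptotically negligible: `lim_n |Δ_n \ Δ_{n−m}|/|Δ_n| = 0`. -/
theorem outer_levels_negligible_of_unexpandable
    (d : ℕ) (T : Set (List (Fin d))) (hT : IsTree T)
    (hne : ∀ n : ℕ, (level T n).Nonempty)
    (hγ : HasExpandingNumber T 1) (m : ℕ) (hm : 1 ≤ m) :
    Tendsto (fun n : ℕ => (((ball T n \ ball T (n - m)).ncard : ℝ) / ((ball T n).ncard : ℝ)))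
      atTop (nhds 0) :=
  outer_levels_negligible_of_unexpandable_general d T hne hγ m
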